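/- Let U be a VLA-J-SS over ℂ. Then the full half Jacobi identity holds, i.e. for all u,v,w ∈ U and all k,m,n ∈ ℕ: Σ_{i≥0} (−1)^i·binom(k,i)·( u_{m+k−i}(v_{n+i}w) − (−1)^k·v_{n+k−i}(u_{m+i}w) ) = Σ_{i≥0} binom(m,i)·( (u_{k+i}v)_{m+n−i} w ), if and only if the half commutator formula holds, i.e. for all u,v,w ∈ U and all m,n ∈ ℕ: u_m(v_nw) − v_n(u_mw) = Σ_{i≥0} binom(m,i)·( (u_iv)_{m+n−i} w ) (which is the case k = 0 of the half Jacobi identity). -/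
import Mathlib


open scoped BigOperators

noncomputable section

/-- A VLA-J-SS over `ℂ`: a vector space `U` with a derivation `D` and bilinear products
`mul n` for `n : ℕ`, satisfying truncation and the `D`-compatibility relations (but not
necessarily the half Jacobi identity or half skew symmetry). -/
structure VLAJSS (U : Type*) [AddCommGroup U] [Module ℂ U] where
  D : U →ₗ[ℂ] U
  mul : ℕ → U →ₗ[ℂ] U →ₗ[ℂ] U
  trunc : ∀ u v : U, ∃ N : ℕ, ∀ n : ℕ, N ≤ n → mul n u v = 0
  dLeft : ∀ (n : ℕ) (u v : U), mul (n + 1) (D u) v = (-((n : ℂ) + 1)) • mul n u v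
  dLeftZero : ∀ u v : U, mul 0 (D u) v = 0
  leibniz : ∀ (n : ℕ) (u v : U), D (mul n u v) = mul n (D u) v + mul n u (D v)

variable {U : Type*} [AddCommGroup U] [Module ℂ U]

/-- The half Jacobi identity for a VLA-J-SS. -/
def HalfJacobi (A : VLAJSS U) : Prop :=
  ∀ (k m n : ℕ) (u v w : U),
    ∑ᶠ i : ℕ, ((-1 : ℂ) ^ i * (Nat.choose k i : ℂ)) •
        (A.mul (m + k - i) u (A.mul (n + i) v w)
          - ((-1 : ℂ) ^ k) • A.mul (n + k - i) v (A.mul (m + i) u w))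
      = ∑ᶠ i : ℕ, ((Nat.choose m i : ℂ)) • A.mul (m + n - i) (A.mul (k + i) u v) w

/-- The half commutator formula (the case `k = 0` of the half Jacobi identity). -/
def HalfCommutator (A : VLAJSS U) : Prop :=
  ∀ (m n : ℕ) (u v w : U),
    A.mul m u (A.mul n v w) - A.mul n v (A.mul m u w)
      = ∑ᶠ i : ℕ, ((Nat.choose m i : ℂ)) • A.mul (m + n - i) (A.mul i u v) w

/-! ### Auxiliary lemmas -/

private lemma finsum_eq_range {M : Type*} [AddCommMonoid M] (f : ℕ → M) (N : ℕ)
    (h : ∀ n, N ≤ n → f n = 0) : ∑ᶠ i, f i = ∑ i ∈ Finset.range N, f i := by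
  apply finsum_eq_finset_sum_of_support_subset
  intro i hi
  simp only [Function.mem_support, ne_eq] at hi
  simp only [Finset.coe_range, Set.mem_Iio]
  by_contra hlt
  exact hi (h i (Nat.le_of_not_lt hlt))

private lemma pascal_sum_neg {M : Type*} [AddCommGroup M] [Module ℂ M] (k : ℕ) (T : ℕ → M) :
    ∑ i ∈ Finset.range (k+2), ((-1:ℂ)^i * ((k+1).choose i : ℂ)) • T i
      = ∑ i ∈ Finset.range (k+1), ((-1:ℂ)^i * (k.choose i : ℂ)) • T i
        - ∑ i ∈ Finset.range (k+1), ((-1:ℂ)^i * (k.choose i : ℂ)) • T (i+1) := by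
  have hsplit : ∀ j : ℕ, ((-1:ℂ)^(j+1) * (((k+1).choose (j+1) : ℕ) : ℂ)) • T (j+1)
      = (-(((-1:ℂ)^j * (k.choose j : ℂ)))) • T (j+1)
        + ((-1:ℂ)^(j+1) * (k.choose (j+1) : ℂ)) • T (j+1) := by
    intro j
    rw [← add_smul]
    congr 1
    rw [Nat.choose_succ_succ]
    push_cast
    ring
  have hS : ∑ i ∈ Finset.range (k+2), ((-1:ℂ)^i * (k.choose i : ℂ)) • T i
      = ∑ j ∈ Finset.range (k+1), ((-1:ℂ)^(j+1) * (k.choose (j+1) : ℂ)) • T (j+1)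
        + ((-1:ℂ)^0 * (k.choose 0 : ℂ)) • T 0 :=
    Finset.sum_range_succ' _ _
  have hS' : ∑ i ∈ Finset.range (k+2), ((-1:ℂ)^i * (k.choose i : ℂ)) • T i
      = ∑ i ∈ Finset.range (k+1), ((-1:ℂ)^i * (k.choose i : ℂ)) • T i := by
    rw [Finset.sum_range_succ, Nat.choose_eq_zero_of_lt (by omega)]
    simp
  have hA2 : ∑ j ∈ Finset.range (k+1), ((-1:ℂ)^(j+1) * (k.choose (j+1) : ℂ)) • T (j+1)
      = ∑ i ∈ Finset.range (k+1), ((-1:ℂ)^i * (k.choose i : ℂ)) • T i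
        - ((-1:ℂ)^0 * (k.choose 0 : ℂ)) • T 0 := by
    rw [← hS', hS]; abel
  rw [Finset.sum_range_succ' _ (k+1)]
  simp only [hsplit]
  rw [Finset.sum_add_distrib, hA2]
  simp only [neg_smul, Finset.sum_neg_distrib]
  simp only [pow_zero, one_mul, Nat.choose_zero_right, Nat.cast_one, one_smul]
  abel

private lemma pascal_sum_pos {M : Type*} [AddCommGroup M] [Module ℂ M] (m : ℕ) (T : ℕ → M) :
    ∑ i ∈ Finset.range (m+2), (((m+1).choose i : ℂ)) • T i
      = ∑ i ∈ Finset.range (m+1), ((m.choose i : ℂ)) • T i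
        + ∑ i ∈ Finset.range (m+1), ((m.choose i : ℂ)) • T (i+1) := by
  have hsplit : ∀ j : ℕ, (((m+1).choose (j+1) : ℕ) : ℂ) • T (j+1)
      = ((m.choose j : ℂ)) • T (j+1) + ((m.choose (j+1) : ℂ)) • T (j+1) := by
    intro j
    rw [← add_smul]
    congr 1
    rw [Nat.choose_succ_succ]
    push_cast
    ring
  have hS : ∑ i ∈ Finset.range (m+2), ((m.choose i : ℂ)) • T i
      = ∑ j ∈ Finset.range (m+1), ((m.choose (j+1) : ℂ)) • T (j+1)
        + ((m.choose 0 : ℂ)) • T 0 :=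
    Finset.sum_range_succ' _ _
  have hS' : ∑ i ∈ Finset.range (m+2), ((m.choose i : ℂ)) • T i
      = ∑ i ∈ Finset.range (m+1), ((m.choose i : ℂ)) • T i := by
    rw [Finset.sum_range_succ, Nat.choose_eq_zero_of_lt (by omega)]
    simp
  have hA2 : ∑ j ∈ Finset.range (m+1), ((m.choose (j+1) : ℂ)) • T (j+1)
      = ∑ i ∈ Finset.range (m+1), ((m.choose i : ℂ)) • T i - ((m.choose 0 : ℂ)) • T 0 := by
    rw [← hS', hS]; abel
  rw [Finset.sum_range_succ' _ (m+1)]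
  simp only [hsplit]
  rw [Finset.sum_add_distrib, hA2]
  simp only [Nat.choose_zero_right, Nat.cast_one, one_smul]
  abel

section Aux

variable (A : VLAJSS U) (u v w : U)

private def Lf (k m n i : ℕ) : U :=
  ((-1 : ℂ) ^ i * (Nat.choose k i : ℂ)) •
    (A.mul (m + k - i) u (A.mul (n + i) v w)
      - ((-1 : ℂ) ^ k) • A.mul (n + k - i) v (A.mul (m + i) u w))

private def Rf (k m n i : ℕ) : U :=
  ((Nat.choose m i : ℂ)) • A.mul (m + n - i) (A.mul (k + i) u v) w

private lemma Lf_vanish (k m n i : ℕ) (h : k + 1 ≤ i) : Lf A u v w k m n i = 0 := by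
  unfold Lf
  rw [Nat.choose_eq_zero_of_lt (by omega)]
  simp

private lemma Rf_vanish (k m n i : ℕ) (h : m + 1 ≤ i) : Rf A u v w k m n i = 0 := by
  unfold Rf
  rw [Nat.choose_eq_zero_of_lt (by omega)]
  simp

private lemma L_finsum (k m n : ℕ) :
    (∑ᶠ i : ℕ, Lf A u v w k m n i) = ∑ i ∈ Finset.range (k+1), Lf A u v w k m n i :=
  finsum_eq_range _ _ (fun i hi => Lf_vanish A u v w k m n i hi)

private lemma R_finsum (k m n : ℕ) :
    (∑ᶠ i : ℕ, Rf A u v w k m n i) = ∑ i ∈ Finset.range (m+1), Rf A u v w k m n i :=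
  finsum_eq_range _ _ (fun i hi => Rf_vanish A u v w k m n i hi)

private lemma L_step (k m n : ℕ) :
    ∑ i ∈ Finset.range (k+2), Lf A u v w (k+1) m n i
      = ∑ i ∈ Finset.range (k+1), Lf A u v w k (m+1) n i
        - ∑ i ∈ Finset.range (k+1), Lf A u v w k m (n+1) i := by
  set T : ℕ → U := fun i =>
    A.mul (m + k + 1 - i) u (A.mul (n + i) v w)
      + ((-1:ℂ)^k) • A.mul (n + k + 1 - i) v (A.mul (m + i) u w) with hT
  have h1 : ∀ i, Lf A u v w (k+1) m n i = ((-1:ℂ)^i * ((k+1).choose i : ℂ)) • T i := by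
    intro i
    unfold Lf
    simp only [hT]
    have e1 : m + (k+1) - i = m + k + 1 - i := by omega
    have e2 : n + (k+1) - i = n + k + 1 - i := by omega
    rw [e1, e2]
    congr 1
    rw [pow_succ]
    module
  have h2 : ∀ i ∈ Finset.range (k+1),
      ((-1:ℂ)^i * (k.choose i : ℂ)) • T i - ((-1:ℂ)^i * (k.choose i : ℂ)) • T (i+1)
        = Lf A u v w k (m+1) n i - Lf A u v w k m (n+1) i := by
    intro i _
    unfold Lf
    simp only [hT]
    have e1 : m + 1 + k - i = m + k + 1 - i := by omega
    have e3 : m + k + 1 - (i+1) = m + k - i := by omega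
    have e4 : n + k + 1 - (i+1) = n + k - i := by omega
    have e5 : n + 1 + k - i = n + k + 1 - i := by omega
    have e6 : n + (i+1) = n + 1 + i := by omega
    have e7 : m + (i+1) = m + 1 + i := by omega
    simp only [e1, e3, e4, e5, e6, e7]
    module
  rw [Finset.sum_congr rfl (fun i _ => h1 i), pascal_sum_neg k T, ← Finset.sum_sub_distrib,
    Finset.sum_congr rfl h2, Finset.sum_sub_distrib]

private lemma R_step (k m n : ℕ) :
    ∑ i ∈ Finset.range (m+2), Rf A u v w k (m+1) n i
      = ∑ i ∈ Finset.range (m+1), Rf A u v w k m (n+1) i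
        + ∑ i ∈ Finset.range (m+1), Rf A u v w (k+1) m n i := by
  set T : ℕ → U := fun i => A.mul (m + n + 1 - i) (A.mul (k + i) u v) w with hT
  have h1 : ∀ i, Rf A u v w k (m+1) n i = (((m+1).choose i : ℂ)) • T i := by
    intro i
    unfold Rf
    simp only [hT]
    have e1 : m + 1 + n - i = m + n + 1 - i := by omega
    rw [e1]
  have h2 : ∀ i, ((m.choose i : ℂ)) • T i = Rf A u v w k m (n+1) i := by
    intro i
    unfold Rf
    simp only [hT]
    have e1 : m + (n+1) - i = m + n + 1 - i := by omega
    rw [e1]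
  have h3 : ∀ i, ((m.choose i : ℂ)) • T (i+1) = Rf A u v w (k+1) m n i := by
    intro i
    unfold Rf
    simp only [hT]
    have e1 : m + n + 1 - (i+1) = m + n - i := by omega
    have e2 : k + (i+1) = k + 1 + i := by omega
    rw [e1, e2]
  rw [Finset.sum_congr rfl (fun i _ => h1 i), pascal_sum_pos m T,
    Finset.sum_congr rfl (fun i _ => h2 i), Finset.sum_congr rfl (fun i _ => h3 i)]

end Aux

private lemma key_induction (A : VLAJSS U) (hC : HalfCommutator A) :
    ∀ k m n : ℕ, ∀ u v w : U,
      ∑ i ∈ Finset.range (k+1), Lf A u v w k m n i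
        = ∑ i ∈ Finset.range (m+1), Rf A u v w k m n i := by
  intro k
  induction k with
  | zero =>
    intro m n u v w
    have hL : ∑ i ∈ Finset.range 1, Lf A u v w 0 m n i
        = A.mul m u (A.mul n v w) - A.mul n v (A.mul m u w) := by
      rw [Finset.sum_range_one]
      unfold Lf
      simp
    rw [hL, hC m n u v w]
    rw [finsum_eq_range _ (m+1) (fun i hi => by
      rw [Nat.choose_eq_zero_of_lt (by omega)]; simp)]
    apply Finset.sum_congr rfl
    intro i _
    unfold Rf
    rw [zero_add]
  | succ k ih =>
    intro m n u v w
    rw [L_step, ih (m+1) n u v w, ih m (n+1) u v w, R_step]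
    abel

/-- for a VLA-J-SS, the half Jacobi identity holds if and only if the half
commutator formula holds. -/
theorem stmt8 (A : VLAJSS U) : HalfJacobi A ↔ HalfCommutator A := by
  constructor
  · intro hJ m n u v w
    have h := hJ 0 m n u v w
    rw [finsum_eq_range _ 1 (fun i hi => by
      rw [Nat.choose_eq_zero_of_lt (by omega)]; simp)] at h
    rw [Finset.sum_range_one] at h
    simp only [pow_zero, Nat.choose_self, Nat.cast_one, one_mul, one_smul, Nat.add_zero,
      Nat.sub_zero, zero_add] at h
    rw [h]
  · intro hC k m n u v w
    have h := key_induction A hC k m n u v w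
    change (∑ᶠ i : ℕ, Lf A u v w k m n i) = ∑ᶠ i : ℕ, Rf A u v w k m n i
    rw [L_finsum A u v w k m n, R_finsum A u v w k m n]
    exact h

end
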